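/- For every t ∈ ℝ, although each of the two kernels below blows up like 1/s² along the diagonal, their combination has a finite limit: lim_{s→0, s≠0} [ G^B_{n_x n_y n_y n_y} + 3·G^B_{n_x n_y τ_y τ_y} ](γ(t), γ(t+s)) = −3κ(t)²/(4π). Here, with r = x − γ(s′), n_x = n(t), n_y = n(s′), τ_y = τ(s′): G^B_{n_x n_y n_y n_y}(x, γ(s′)) = −(3/(4π))(n_x·n_y)/‖r‖² + (3/(2π))(r·n_y)(r·n_x)/‖r‖⁴ + (3/(2π))(r·n_y)²(n_x·n_y)/‖r‖⁴ − (2/π)(r·n_y)³(r·n_x)/‖r‖⁶, and G^B_{n_x n_y τ_y τ_y}(x, γ(s′)) = (1/(2π))(n_x·n_y)(r·τ_y)²/‖r‖⁴ + (1/π)(r·n_y)(r·τ_y)(n_x·τ_y)/‖r‖⁴ − (2/π)(r·n_y)(r·τ_y)²(r·n_x)/‖r‖⁶ − (1/(4π))(n_x·n_y)/‖r‖² + (1/(2π))(r·n_y)(r·n_x)/‖r‖⁴, evaluated at x = γ(t). -/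

import Mathlib

open Real Filter Topology MeasureTheory

noncomputable section

/-- Euclidean dot product on `ℝ × ℝ`. -/
def dot2 (v w : ℝ × ℝ) : ℝ := v.1 * w.1 + v.2 * w.2

/-- Unit tangent vector `τ(s) = γ′(s)`. -/
def tang (γ : ℝ → ℝ × ℝ) (s : ℝ) : ℝ × ℝ := deriv γ s

/-- Unit normal vector `n(s) = (τ₂(s), −τ₁(s))`. -/
def nor (γ : ℝ → ℝ × ℝ) (s : ℝ) : ℝ × ℝ := ((deriv γ s).2, -(deriv γ s).1)

/-- Signed curvature `κ(s) = −γ″(s)·n(s)`. -/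
def curv (γ : ℝ → ℝ × ℝ) (s : ℝ) : ℝ := -(dot2 (deriv (deriv γ) s) (nor γ s))

/-- Explicit formula for `G^B_{n_x n_y n_y n_y}(x, γ(s'))`, with `r = x − γ(s')`,
`n_x = n(t)`, `n_y = n(s')`. -/
def GB_nx_ny_ny_ny (γ : ℝ → ℝ × ℝ) (t : ℝ) (x : ℝ × ℝ) (s' : ℝ) : ℝ :=
  -(3 / (4 * π)) * dot2 (nor γ t) (nor γ s') / dot2 (x - γ s') (x - γ s')
    + 3 / (2 * π) * dot2 (x - γ s') (nor γ s') * dot2 (x - γ s') (nor γ t)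
      / (dot2 (x - γ s') (x - γ s')) ^ 2
    + 3 / (2 * π) * (dot2 (x - γ s') (nor γ s')) ^ 2 * dot2 (nor γ t) (nor γ s')
      / (dot2 (x - γ s') (x - γ s')) ^ 2
    - 2 / π * (dot2 (x - γ s') (nor γ s')) ^ 3 * dot2 (x - γ s') (nor γ t)
      / (dot2 (x - γ s') (x - γ s')) ^ 3

/-- Explicit formula for `G^B_{n_x n_y τ_y τ_y}(x, γ(s'))`, with `r = x − γ(s')`,
`n_x = n(t)`, `n_y = n(s')`, `τ_y = τ(s')`. -/
def GB_nx_ny_ty_ty (γ : ℝ → ℝ × ℝ) (t : ℝ) (x : ℝ × ℝ) (s' : ℝ) : ℝ :=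
  1 / (2 * π) * dot2 (nor γ t) (nor γ s') * (dot2 (x - γ s') (tang γ s')) ^ 2
      / (dot2 (x - γ s') (x - γ s')) ^ 2
    + 1 / π * dot2 (x - γ s') (nor γ s') * dot2 (x - γ s') (tang γ s')
        * dot2 (nor γ t) (tang γ s') / (dot2 (x - γ s') (x - γ s')) ^ 2
    - 2 / π * dot2 (x - γ s') (nor γ s') * (dot2 (x - γ s') (tang γ s')) ^ 2
        * dot2 (x - γ s') (nor γ t) / (dot2 (x - γ s') (x - γ s')) ^ 3
    - 1 / (4 * π) * dot2 (nor γ t) (nor γ s') / dot2 (x - γ s') (x - γ s')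
    + 1 / (2 * π) * dot2 (x - γ s') (nor γ s') * dot2 (x - γ s') (nor γ t)
      / (dot2 (x - γ s') (x - γ s')) ^ 2


/-!
Write `r = γ(t) - γ(t+s)` in the frame `(τ_y, n_y)` at `y = γ(t+s)`: with `p = r·τ_y`,
`q = r·n_y`, `d = n_x·τ_y`, `c = n_x·n_y` one has `‖r‖² = p² + q²` and `r·n_x = p d + q c`.
In these variables the `1/‖r‖²` terms of the two kernels cancel exactly, leaving a rational
function `regularPart p q d c ‖r‖²` which is invariant under `p, d ↦ p/s, d/s` and
`q, ‖r‖² ↦ q/s², ‖r‖²/s²`. Taylor expansion at `s = 0` gives `p/s → -1`, `d/s → -κ`,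
`q/s² → -κ/2`, `‖r‖²/s² → 1` and `c → 1`, and the limit is the value of `regularPart` there.
-/

def rot (v : ℝ × ℝ) : ℝ × ℝ := (v.2, -v.1)

lemma nor_eq_rot (γ : ℝ → ℝ × ℝ) (s : ℝ) : nor γ s = rot (tang γ s) := rfl

lemma dot2_comm (v w : ℝ × ℝ) : dot2 v w = dot2 w v := by
  unfold dot2; ring

@[simp]
lemma dot2_zero_left (w : ℝ × ℝ) : dot2 0 w = 0 := by
  simp [dot2]

@[simp]
lemma dot2_rot_rot (v w : ℝ × ℝ) : dot2 (rot v) (rot w) = dot2 v w := by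
  unfold dot2 rot; ring

@[simp]
lemma dot2_rot_right_self (v : ℝ × ℝ) : dot2 v (rot v) = 0 := by
  unfold dot2 rot; ring

@[simp]
lemma dot2_rot_left_self (v : ℝ × ℝ) : dot2 (rot v) v = 0 := by
  unfold dot2 rot; ring

lemma dot2_rot_left_comm (v w : ℝ × ℝ) : dot2 (rot v) w = -dot2 v (rot w) := by
  unfold dot2 rot; ring

@[simp]
lemma dot2_neg_left (v w : ℝ × ℝ) : dot2 (-v) w = -dot2 v w := by
  unfold dot2; simp only [Prod.fst_neg, Prod.snd_neg]; ring

@[simp]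
lemma dot2_neg_right (v w : ℝ × ℝ) : dot2 v (-w) = -dot2 v w := by
  unfold dot2; simp only [Prod.fst_neg, Prod.snd_neg]; ring

lemma dot2_eq_of_unit {u : ℝ × ℝ} (hu : dot2 u u = 1) (v w : ℝ × ℝ) :
    dot2 v w = dot2 v u * dot2 w u + dot2 v (rot u) * dot2 w (rot u) := by
  unfold dot2 rot at *
  linear_combination (-(v.1 * w.1 + v.2 * w.2)) * hu

lemma HasDerivAt.fst {f : ℝ → ℝ × ℝ} {f' : ℝ × ℝ} {x : ℝ} (hf : HasDerivAt f f' x) :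
    HasDerivAt (fun s => (f s).1) f'.1 x := by
  simpa using hf.hasFDerivAt.fst.hasDerivAt

lemma HasDerivAt.snd {f : ℝ → ℝ × ℝ} {f' : ℝ × ℝ} {x : ℝ} (hf : HasDerivAt f f' x) :
    HasDerivAt (fun s => (f s).2) f'.2 x := by
  simpa using hf.hasFDerivAt.snd.hasDerivAt

lemma HasDerivAt.dot2 {f g : ℝ → ℝ × ℝ} {f' g' : ℝ × ℝ} {x : ℝ}
    (hf : HasDerivAt f f' x) (hg : HasDerivAt g g' x) :
    HasDerivAt (fun s => _root_.dot2 (f s) (g s))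
      (_root_.dot2 f' (g x) + _root_.dot2 (f x) g') x := by
  refine ((hf.fst.mul hg.fst).add (hf.snd.mul hg.snd)).congr_deriv ?_
  unfold _root_.dot2; ring

lemma HasDerivAt.rot {f : ℝ → ℝ × ℝ} {f' : ℝ × ℝ} {x : ℝ} (hf : HasDerivAt f f' x) :
    HasDerivAt (fun s => _root_.rot (f s)) (_root_.rot f') x :=
  hf.snd.prodMk hf.fst.neg

lemma tendsto_div_of_hasDerivAt {f : ℝ → ℝ} {f' : ℝ} (hf : HasDerivAt f f' 0) (h0 : f 0 = 0) :
    Tendsto (fun s => f s / s) (𝓝[≠] 0) (𝓝 f') := by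
  refine hf.tendsto_slope_zero.congr fun s => ?_
  simp [h0, div_eq_inv_mul]

lemma tendsto_div_sq_of_hasDerivAt {f f₁ : ℝ → ℝ} {f₂ : ℝ}
    (hf : ∀ᶠ s in 𝓝 0, HasDerivAt f (f₁ s) s) (hf₁ : HasDerivAt f₁ f₂ 0)
    (h0 : f 0 = 0) (h₁0 : f₁ 0 = 0) :
    Tendsto (fun s => f s / s ^ 2) (𝓝[≠] 0) (𝓝 (f₂ / 2)) := by
  have hcont : Tendsto f (𝓝[≠] 0) (𝓝 0) := by
    simpa [h0] using hf.self_of_nhds.continuousAt.tendsto.mono_left (nhdsWithin_le_nhds (s := {0}ᶜ))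
  have hsq : Tendsto (fun s : ℝ => s ^ 2) (𝓝[≠] 0) (𝓝 0) := by
    simpa using ((continuous_pow 2).tendsto (0 : ℝ)).mono_left nhdsWithin_le_nhds
  refine HasDerivAt.lhopital_zero_nhdsNE (g' := fun s => 2 * s) (nhdsWithin_le_nhds hf)
    (Eventually.of_forall fun s => by simpa using hasDerivAt_pow 2 s)
    (eventually_nhdsWithin_of_forall fun s hs => mul_ne_zero two_ne_zero hs) hcont hsq ?_
  refine ((tendsto_div_of_hasDerivAt hf₁ h₁0).div_const 2).congr' ?_
  filter_upwards [self_mem_nhdsWithin] with s hs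
  field_simp

section Curve

variable {γ : ℝ → ℝ × ℝ} (t : ℝ)

lemma hasDerivAt_chord (hγ : Differentiable ℝ γ) (s : ℝ) :
    HasDerivAt (fun s => γ t - γ (t + s)) (-tang γ (t + s)) s :=
  ((hγ (t + s)).hasDerivAt.comp_const_add t s).const_sub (γ t)

lemma hasDerivAt_tang (hγ : ContDiff ℝ 2 γ) (s : ℝ) :
    HasDerivAt (fun s => tang γ (t + s)) (deriv (deriv γ) (t + s)) s :=
  ((hγ.deriv' (n := 1)).differentiable one_ne_zero (t + s)).hasDerivAt.comp_const_add t s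

lemma hasDerivAt_dot2_chord_tang_zero (hγ : ContDiff ℝ 2 γ)
    (ht : dot2 (tang γ t) (tang γ t) = 1) :
    HasDerivAt (fun s => dot2 (γ t - γ (t + s)) (tang γ (t + s))) (-1) 0 := by
  refine ((hasDerivAt_chord t (hγ.differentiable (by norm_num)) 0).dot2
    (hasDerivAt_tang t hγ 0)).congr_deriv ?_
  simp [ht]

lemma tendsto_dot2_chord_tang (hγ : ContDiff ℝ 2 γ) (ht : dot2 (tang γ t) (tang γ t) = 1) :
    Tendsto (fun s => dot2 (γ t - γ (t + s)) (tang γ (t + s)) / s) (𝓝[≠] 0) (𝓝 (-1)) :=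
  tendsto_div_of_hasDerivAt (hasDerivAt_dot2_chord_tang_zero t hγ ht) (by simp)

lemma tendsto_dot2_nor_tang (hγ : ContDiff ℝ 2 γ) :
    Tendsto (fun s => dot2 (nor γ t) (tang γ (t + s)) / s) (𝓝[≠] 0) (𝓝 (-curv γ t)) := by
  refine tendsto_div_of_hasDerivAt ?_ (by simp [nor_eq_rot])
  refine ((hasDerivAt_const (0 : ℝ) (nor γ t)).dot2 (hasDerivAt_tang t hγ 0)).congr_deriv ?_
  simp [curv, dot2_comm (nor γ t)]

lemma tendsto_dot2_chord_nor (hγ : ContDiff ℝ 3 γ) :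
    Tendsto (fun s => dot2 (γ t - γ (t + s)) (nor γ (t + s)) / s ^ 2) (𝓝[≠] 0)
      (𝓝 (-curv γ t / 2)) := by
  have hchord := hasDerivAt_chord t (hγ.differentiable (by norm_num))
  refine tendsto_div_sq_of_hasDerivAt
    (f₁ := fun s => dot2 (γ t - γ (t + s)) (rot (deriv (deriv γ) (t + s))))
    (Eventually.of_forall fun s => ?_) ?_ (by simp) (by simp)
  · refine ((hchord s).dot2 (hasDerivAt_tang t hγ.of_succ s).rot).congr_deriv ?_
    simp
  · have hγ'' := (((hγ.deriv' (n := 2)).deriv' (n := 1)).differentiable one_ne_zero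
      (t + 0)).hasDerivAt.comp_const_add t 0
    refine ((hchord 0).dot2 hγ''.rot).congr_deriv ?_
    simp [curv, nor_eq_rot, dot2_comm (deriv (deriv γ) t), dot2_rot_left_comm]

lemma tendsto_dot2_chord_chord (hγ : ContDiff ℝ 2 γ) (ht : dot2 (tang γ t) (tang γ t) = 1) :
    Tendsto (fun s => dot2 (γ t - γ (t + s)) (γ t - γ (t + s)) / s ^ 2) (𝓝[≠] 0) (𝓝 1) := by
  have hchord := hasDerivAt_chord t (hγ.differentiable (by norm_num))
  have hlim : Tendsto (fun s => dot2 (γ t - γ (t + s)) (γ t - γ (t + s)) / s ^ 2) (𝓝[≠] 0)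
      (𝓝 (-2 * -1 / 2)) := by
    refine tendsto_div_sq_of_hasDerivAt
      (f₁ := fun s => -2 * dot2 (γ t - γ (t + s)) (tang γ (t + s)))
      (Eventually.of_forall fun s => ?_)
      ((hasDerivAt_dot2_chord_tang_zero t hγ ht).const_mul (-2)) (by simp) (by simp)
    refine ((hchord s).dot2 (hchord s)).congr_deriv ?_
    simp only [dot2_neg_left, dot2_neg_right, dot2_comm (tang γ (t + s))]
    ring
  norm_num at hlim
  exact hlim

lemma tendsto_dot2_nor_nor (hγ : ContDiff ℝ 1 γ) (ht : dot2 (tang γ t) (tang γ t) = 1) :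
    Tendsto (fun s => dot2 (nor γ t) (nor γ (t + s))) (𝓝[≠] 0) (𝓝 1) := by
  have hcont : Continuous fun s => dot2 (nor γ t) (nor γ (t + s)) := by
    have := hγ.continuous_deriv le_rfl
    unfold dot2 nor
    fun_prop
  simpa [nor_eq_rot, ht] using hcont.tendsto 0 |>.mono_left nhdsWithin_le_nhds

end Curve

def regularPart (p q d c ρ : ℝ) : ℝ :=
  ((4 * q * p * d + q ^ 2 * c) / ρ ^ 2 - 4 * q * p ^ 2 * (p * d + q * c) / ρ ^ 3) / π

lemma GB_nx_ny_ny_ny_add_three_mul_GB_nx_ny_ty_ty (γ : ℝ → ℝ × ℝ) (t : ℝ) (x : ℝ × ℝ)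
    {s : ℝ} (hs : dot2 (tang γ s) (tang γ s) = 1) :
    GB_nx_ny_ny_ny γ t x s + 3 * GB_nx_ny_ty_ty γ t x s =
      regularPart (dot2 (x - γ s) (tang γ s)) (dot2 (x - γ s) (nor γ s))
        (dot2 (nor γ t) (tang γ s)) (dot2 (nor γ t) (nor γ s)) (dot2 (x - γ s) (x - γ s)) := by
  have hr := dot2_eq_of_unit hs (x - γ s) (x - γ s)
  have hrn := dot2_eq_of_unit hs (x - γ s) (nor γ t)
  simp only [GB_nx_ny_ny_ny, GB_nx_ny_ty_ty, regularPart, ← nor_eq_rot] at *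
  rw [hr, hrn]
  generalize dot2 (x - γ s) (tang γ s) = p
  generalize dot2 (x - γ s) (nor γ s) = q
  generalize dot2 (nor γ t) (tang γ s) = d
  generalize dot2 (nor γ t) (nor γ s) = c
  rcases eq_or_ne (p * p + q * q) 0 with h | h
  · obtain ⟨rfl, rfl⟩ : p = 0 ∧ q = 0 := by constructor <;> nlinarith [sq_nonneg p, sq_nonneg q]
    simp
  · field_simp
    ring

lemma regularPart_div (p q d c ρ : ℝ) {s : ℝ} (hs : s ≠ 0) :
    regularPart (p / s) (q / s ^ 2) (d / s) c (ρ / s ^ 2) = regularPart p q d c ρ := by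
  rcases eq_or_ne ρ 0 with rfl | hρ
  · simp [regularPart]
  · simp only [regularPart]
    field_simp

lemma Filter.Tendsto.regularPart {α : Type*} {l : Filter α} {p q d c ρ : α → ℝ}
    {p₀ q₀ d₀ c₀ ρ₀ : ℝ} (hp : Tendsto p l (𝓝 p₀)) (hq : Tendsto q l (𝓝 q₀))
    (hd : Tendsto d l (𝓝 d₀)) (hc : Tendsto c l (𝓝 c₀)) (hρ : Tendsto ρ l (𝓝 ρ₀))
    (hρ₀ : ρ₀ ≠ 0) :
    Tendsto (fun a => _root_.regularPart (p a) (q a) (d a) (c a) (ρ a)) l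
      (𝓝 (_root_.regularPart p₀ q₀ d₀ c₀ ρ₀)) :=
  (((((hq.const_mul 4).mul hp).mul hd).add ((hq.pow 2).mul hc)).div (hρ.pow 2) (pow_ne_zero 2 hρ₀)
    |>.sub ((((hq.const_mul 4).mul (hp.pow 2)).mul ((hp.mul hd).add (hq.mul hc))).div (hρ.pow 3)
      (pow_ne_zero 3 hρ₀))).div_const π

lemma regularPart_at_limit (κ : ℝ) :
    regularPart (-1) (-κ / 2) (-κ) 1 1 = -(3 * κ ^ 2) / (4 * π) := by
  simp only [regularPart]
  field_simp
  ring

theorem stmt4_general (γ : ℝ → ℝ × ℝ)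
    (hγ : ContDiff ℝ (⊤ : ℕ∞) γ)
    (harc : ∀ s, dot2 (deriv γ s) (deriv γ s) = 1)
    (t : ℝ) :
    Tendsto
      (fun s : ℝ =>
        GB_nx_ny_ny_ny γ t (γ t) (t + s) + 3 * GB_nx_ny_ty_ty γ t (γ t) (t + s))
      (𝓝[≠] (0 : ℝ)) (𝓝 (-(3 * (curv γ t) ^ 2) / (4 * π))) := by
  have hγ3 : ContDiff ℝ 3 γ := hγ.of_le (WithTop.coe_le_coe.2 le_top)
  have hlim := (tendsto_dot2_chord_tang t hγ3.of_succ (harc t)).regularPart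
    (tendsto_dot2_chord_nor t hγ3) (tendsto_dot2_nor_tang t hγ3.of_succ)
    (tendsto_dot2_nor_nor t hγ3.of_succ.of_succ (harc t))
    (tendsto_dot2_chord_chord t hγ3.of_succ (harc t)) one_ne_zero
  rw [regularPart_at_limit] at hlim
  refine hlim.congr' ?_
  filter_upwards [self_mem_nhdsWithin] with s hs
  rw [regularPart_div _ _ _ _ _ hs, GB_nx_ny_ny_ny_add_three_mul_GB_nx_ny_ty_ty _ _ _ (harc _)]

theorem stmt4 (L : ℝ) (hL : 0 < L) (γ : ℝ → ℝ × ℝ)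
    (hγ : ContDiff ℝ (⊤ : ℕ∞) γ)
    (hper : ∀ s, γ (s + L) = γ s)
    (hinj : Set.InjOn γ (Set.Ico 0 L))
    (harc : ∀ s, dot2 (deriv γ s) (deriv γ s) = 1)
    (t : ℝ) :
    Tendsto
      (fun s : ℝ =>
        GB_nx_ny_ny_ny γ t (γ t) (t + s) + 3 * GB_nx_ny_ty_ty γ t (γ t) (t + s))
      (𝓝[≠] (0 : ℝ)) (𝓝 (-(3 * (curv γ t) ^ 2) / (4 * π))) :=
  stmt4_general γ hγ harc t
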